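/- arXiv:1812.10250 — 2 statements merged into one kernel-verified Lean document; each statement's English description precedes it below -/
import Mathlib

section
/- Let ε > 0, f ∈ V*, g ∈ Q*, let (u_ε, p_ε) ∈ V × Q solve the ε-Stokes system ES(ε) and let (u_PP, p_PP) ∈ V × Q solve the pressure-Poisson system PP (with the same f and g). Then ‖p_ε − p_PP‖_Q ≤ (1/ε)·D(u_PP) and ‖u_ε − u_PP‖_V ≤ (‖b‖/ε)·D(u_PP). (Quantitative part of Theorem 3.2.) -/
open scoped RealInnerProductSpace

/-!
Subtracting the two systems, the errors `eᵤ = uε - uPP`, `eₚ = pε - pPP` satisfy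
`⟪eᵤ, φ⟫ = -b(φ, eₚ)` and `ε⟪eₚ, ψ⟫ = b(eᵤ + uPP, ψ)`. Testing these with `eᵤ` and `eₚ` gives the
energy identity `ε‖eₚ‖² + ‖eᵤ‖² = b(uPP, eₚ) ≤ ‖b uPP‖‖eₚ‖`, which bounds `eₚ`; the first error
equation then bounds `‖eᵤ‖` by `‖b‖‖eₚ‖`.
-/

lemma mul_le_of_mul_sq_le_mul {ε c x : ℝ} (hx : 0 ≤ x) (hc : 0 ≤ c) (h : ε * x ^ 2 ≤ c * x) :
    ε * x ≤ c := by
  rcases hx.eq_or_lt with rfl | hx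
  · simpa using hc
  · exact le_of_mul_le_mul_right (by linarith) hx

section ErrorEquations

variable {V Q : Type*} [NormedAddCommGroup V] [InnerProductSpace ℝ V]
  [NormedAddCommGroup Q] [InnerProductSpace ℝ Q] (b : V →L[ℝ] Q →L[ℝ] ℝ)

lemma norm_le_opNorm_mul_norm_of_inner_eq_neg {e : V} {q : Q} (h : ∀ φ, ⟪e, φ⟫ = -b φ q) :
    ‖e‖ ≤ ‖b‖ * ‖q‖ := by
  have hsq : 1 * ‖e‖ ^ 2 ≤ ‖b‖ * ‖q‖ * ‖e‖ :=
    calc 1 * ‖e‖ ^ 2 = -b e q := by rw [one_mul, ← real_inner_self_eq_norm_sq, h]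
      _ ≤ ‖b e q‖ := neg_le_abs _
      _ ≤ ‖b‖ * ‖e‖ * ‖q‖ := b.le_opNorm₂ e q
      _ = ‖b‖ * ‖q‖ * ‖e‖ := by ring
  simpa using mul_le_of_mul_sq_le_mul (norm_nonneg e) (by positivity) hsq

variable {b}

lemma mul_norm_sq_add_norm_sq_eq {ε : ℝ} {eu w : V} {ep : Q} (h₁ : ∀ φ, ⟪eu, φ⟫ = -b φ ep)
    (h₂ : ∀ ψ, ε * ⟪ep, ψ⟫ = b (eu + w) ψ) :
    ε * ‖ep‖ ^ 2 + ‖eu‖ ^ 2 = b w ep := by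
  rw [← real_inner_self_eq_norm_sq, ← real_inner_self_eq_norm_sq, h₂, h₁, map_add,
    add_apply]
  ring

lemma mul_norm_le_norm_of_inner_eq {ε : ℝ} {eu w : V} {ep : Q} (h₁ : ∀ φ, ⟪eu, φ⟫ = -b φ ep)
    (h₂ : ∀ ψ, ε * ⟪ep, ψ⟫ = b (eu + w) ψ) :
    ε * ‖ep‖ ≤ ‖b w‖ := by
  refine mul_le_of_mul_sq_le_mul (norm_nonneg ep) (norm_nonneg _) ?_
  calc ε * ‖ep‖ ^ 2 ≤ ε * ‖ep‖ ^ 2 + ‖eu‖ ^ 2 := le_add_of_nonneg_right (sq_nonneg _)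
    _ = b w ep := mul_norm_sq_add_norm_sq_eq h₁ h₂
    _ ≤ ‖b w ep‖ := le_abs_self _
    _ ≤ ‖b w‖ * ‖ep‖ := (b w).le_opNorm ep

end ErrorEquations

theorem epsStokes_to_pressurePoisson_estimate_general {V Q : Type*}
    [NormedAddCommGroup V] [InnerProductSpace ℝ V]
    [NormedAddCommGroup Q] [InnerProductSpace ℝ Q]
    (b : V →L[ℝ] Q →L[ℝ] ℝ)
    (ε : ℝ) (hε : 0 < ε) (f : V →L[ℝ] ℝ) (g : Q →L[ℝ] ℝ)
    (uε : V) (pε : Q) (uPP : V) (pPP : Q)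
    (hES1 : ∀ φ : V, ⟪uε, φ⟫ + b φ pε = f φ)
    (hES2 : ∀ ψ : Q, ε * ⟪pε, ψ⟫ - b uε ψ = ε * g ψ)
    (hPP1 : ∀ φ : V, ⟪uPP, φ⟫ + b φ pPP = f φ)
    (hPP2 : ∀ ψ : Q, ⟪pPP, ψ⟫ = g ψ) :
    ‖pε - pPP‖ ≤ (1 / ε) * ‖b uPP‖ ∧ ‖uε - uPP‖ ≤ (‖b‖ / ε) * ‖b uPP‖ := by
  have h₁ : ∀ φ, ⟪uε - uPP, φ⟫ = -b φ (pε - pPP) := fun φ => by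
    rw [inner_sub_left, map_sub]
    linarith [hES1 φ, hPP1 φ]
  have h₂ : ∀ ψ, ε * ⟪pε - pPP, ψ⟫ = b (uε - uPP + uPP) ψ := fun ψ => by
    rw [sub_add_cancel, inner_sub_left, mul_sub, hPP2]
    linarith [hES2 ψ]
  have hp : ‖pε - pPP‖ ≤ (1 / ε) * ‖b uPP‖ := by
    rw [one_div_mul_eq_div, le_div_iff₀' hε]
    exact mul_norm_le_norm_of_inner_eq h₁ h₂
  refine ⟨hp, ?_⟩
  calc ‖uε - uPP‖ ≤ ‖b‖ * ‖pε - pPP‖ := norm_le_opNorm_mul_norm_of_inner_eq_neg b h₁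
    _ ≤ ‖b‖ * ((1 / ε) * ‖b uPP‖) := by gcongr
    _ = (‖b‖ / ε) * ‖b uPP‖ := by ring

/-- Quantitative part of Theorem 3.2: error between the solutions of ES(ε) and PP, in terms of
the divergence seminorm `D(u_PP) = ‖b u_PP‖ = sup{|b(u_PP,ψ)| : ‖ψ‖ ≤ 1}`. -/
theorem epsStokes_to_pressurePoisson_estimate {V Q : Type*}
    [NormedAddCommGroup V] [InnerProductSpace ℝ V] [CompleteSpace V]
    [NormedAddCommGroup Q] [InnerProductSpace ℝ Q] [CompleteSpace Q]
    (b : V →L[ℝ] Q →L[ℝ] ℝ)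
    (ε : ℝ) (hε : 0 < ε) (f : V →L[ℝ] ℝ) (g : Q →L[ℝ] ℝ)
    (uε : V) (pε : Q) (uPP : V) (pPP : Q)
    (hES1 : ∀ φ : V, ⟪uε, φ⟫ + b φ pε = f φ)
    (hES2 : ∀ ψ : Q, ε * ⟪pε, ψ⟫ - b uε ψ = ε * g ψ)
    (hPP1 : ∀ φ : V, ⟪uPP, φ⟫ + b φ pPP = f φ)
    (hPP2 : ∀ ψ : Q, ⟪pPP, ψ⟫ = g ψ) :
    ‖pε - pPP‖ ≤ (1 / ε) * ‖b uPP‖ ∧ ‖uε - uPP‖ ≤ (‖b‖ / ε) * ‖b uPP‖ :=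
  epsStokes_to_pressurePoisson_estimate_general b ε hε f g uε pε uPP pPP hES1 hES2 hPP1 hPP2
end

section
/- Assume the Nečas-type inf-sup bound with seminorm N and constant c_N. Let f ∈ V*, g ∈ Q*, and for ε ∈ (0,1] let (u_ε, p_ε) ∈ V × Q solve the ε-Stokes system ES(ε). Then ‖u_ε‖_V ≤ (‖f‖_{V*}² + ‖g‖_{Q*}²)^{1/2}, √ε·‖p_ε‖_Q ≤ (‖f‖_{V*}² + ‖g‖_{Q*}²)^{1/2}, and N(p_ε) ≤ c_N·((‖f‖_{V*}² + ‖g‖_{Q*}²)^{1/2} + ‖f‖_{V*}); in particular the solutions are bounded uniformly in ε ∈ (0,1]. (Boundedness part of Theorem 4.2.) -/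
open scoped RealInnerProductSpace

/-!
Testing the momentum equation with `u` and the pressure equation with `p` and adding them, the
coupling terms `b u p` cancel: `‖u‖² + ε‖p‖² = f u + ε g p`. Young's inequality then gives
`‖u‖² + ε‖p‖² ≤ ‖f‖² + ε‖g‖² ≤ ‖f‖² + ‖g‖²` for `ε ≤ 1`. The momentum equation also says
`b(·, p) = f - ⟪u, ·⟫`, so `‖b(·, p)‖ ≤ ‖u‖ + ‖f‖`, and the inf-sup bound turns this into a bound
on `N p` that does not degenerate as `ε → 0`.
-/

section

variable {V Q : Type*} [NormedAddCommGroup V] [InnerProductSpace ℝ V]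
  [NormedAddCommGroup Q] [InnerProductSpace ℝ Q]

def IsEpsStokesSolution (b : V →L[ℝ] Q →L[ℝ] ℝ) (f : V →L[ℝ] ℝ) (g : Q →L[ℝ] ℝ) (ε : ℝ)
    (u : V) (p : Q) : Prop :=
  (∀ φ : V, ⟪u, φ⟫ + b φ p = f φ) ∧ (∀ ψ : Q, ε * ⟪p, ψ⟫ - b u ψ = ε * g ψ)

namespace IsEpsStokesSolution

variable {b : V →L[ℝ] Q →L[ℝ] ℝ} {f : V →L[ℝ] ℝ} {g : Q →L[ℝ] ℝ} {ε : ℝ} {u : V} {p : Q}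

theorem energy_eq (h : IsEpsStokesSolution b f g ε u p) :
    ‖u‖ ^ 2 + ε * ‖p‖ ^ 2 = f u + ε * g p := by
  have hu := h.1 u
  have hp := h.2 p
  rw [real_inner_self_eq_norm_sq] at hu hp
  linarith

theorem energy_le (h : IsEpsStokesSolution b f g ε u p) (hε : 0 ≤ ε) :
    ‖u‖ ^ 2 + ε * ‖p‖ ^ 2 ≤ ‖f‖ ^ 2 + ε * ‖g‖ ^ 2 := by
  have hfu : f u ≤ ‖f‖ * ‖u‖ := (le_abs_self _).trans (f.le_opNorm u)
  have hgp : g p ≤ ‖g‖ * ‖p‖ := (le_abs_self _).trans (g.le_opNorm p)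
  have young_u := two_mul_le_add_sq ‖f‖ ‖u‖
  have young_p := mul_le_mul_of_nonneg_left (two_mul_le_add_sq ‖g‖ ‖p‖) hε
  nlinarith [h.energy_eq, mul_le_mul_of_nonneg_left hgp hε]

theorem energy_le_of_le_one (h : IsEpsStokesSolution b f g ε u p) (hε : 0 ≤ ε) (hε1 : ε ≤ 1) :
    ‖u‖ ^ 2 + ε * ‖p‖ ^ 2 ≤ ‖f‖ ^ 2 + ‖g‖ ^ 2 :=
  (h.energy_le hε).trans <| by
    gcongr
    exact mul_le_of_le_one_left (sq_nonneg _) hε1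

theorem norm_le (h : IsEpsStokesSolution b f g ε u p) (hε : 0 ≤ ε) (hε1 : ε ≤ 1) :
    ‖u‖ ≤ √(‖f‖ ^ 2 + ‖g‖ ^ 2) := by
  apply Real.le_sqrt_of_sq_le
  nlinarith [h.energy_le_of_le_one hε hε1, mul_nonneg hε (sq_nonneg ‖p‖)]

theorem sqrt_mul_norm_le (h : IsEpsStokesSolution b f g ε u p) (hε : 0 ≤ ε) (hε1 : ε ≤ 1) :
    √ε * ‖p‖ ≤ √(‖f‖ ^ 2 + ‖g‖ ^ 2) := by
  apply Real.le_sqrt_of_sq_le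
  rw [mul_pow, Real.sq_sqrt hε]
  nlinarith [h.energy_le_of_le_one hε hε1, sq_nonneg ‖u‖]

theorem flip_eq (h : IsEpsStokesSolution b f g ε u p) : b.flip p = f - innerSL ℝ u := by
  ext φ
  simp only [ContinuousLinearMap.flip_apply, sub_apply, innerSL_apply_apply]
  linarith [h.1 φ]

theorem norm_flip_le (h : IsEpsStokesSolution b f g ε u p) : ‖b.flip p‖ ≤ ‖u‖ + ‖f‖ := by
  rw [h.flip_eq, add_comm]
  exact (norm_sub_le _ _).trans_eq (by rw [innerSL_apply_norm])

end IsEpsStokesSolution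

end

theorem epsStokes_uniform_boundedness_general {V Q : Type*}
    [NormedAddCommGroup V] [InnerProductSpace ℝ V]
    [NormedAddCommGroup Q] [InnerProductSpace ℝ Q]
    (b : V →L[ℝ] Q →L[ℝ] ℝ)
    (N : Seminorm ℝ Q) (cN : ℝ) (hcN : 0 < cN)
    (hNecas : ∀ q : Q, N q ≤ cN * ‖b.flip q‖)
    (f : V →L[ℝ] ℝ) (g : Q →L[ℝ] ℝ)
    (u : ℝ → V) (p : ℝ → Q)
    (hsol : ∀ ε : ℝ, 0 < ε → ε ≤ 1 →
      (∀ φ : V, ⟪u ε, φ⟫ + b φ (p ε) = f φ) ∧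
      (∀ ψ : Q, ε * ⟪p ε, ψ⟫ - b (u ε) ψ = ε * g ψ)) :
    ∀ ε : ℝ, 0 < ε → ε ≤ 1 →
      ‖u ε‖ ≤ Real.sqrt (‖f‖ ^ 2 + ‖g‖ ^ 2) ∧
      Real.sqrt ε * ‖p ε‖ ≤ Real.sqrt (‖f‖ ^ 2 + ‖g‖ ^ 2) ∧
      N (p ε) ≤ cN * (Real.sqrt (‖f‖ ^ 2 + ‖g‖ ^ 2) + ‖f‖) := by
  intro ε hε hε1
  have h : IsEpsStokesSolution b f g ε (u ε) (p ε) := hsol ε hε hε1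
  refine ⟨h.norm_le hε.le hε1, h.sqrt_mul_norm_le hε.le hε1, ?_⟩
  calc N (p ε) ≤ cN * ‖b.flip (p ε)‖ := hNecas _
    _ ≤ cN * (√(‖f‖ ^ 2 + ‖g‖ ^ 2) + ‖f‖) := by
      gcongr
      exact h.norm_flip_le.trans (by gcongr; exact h.norm_le hε.le hε1)

/-- Boundedness part of Theorem 4.2: the solutions of ES(ε) are bounded uniformly for
ε ∈ (0,1]: `‖u_ε‖ ≤ (‖f‖² + ‖g‖²)^{1/2}`, `√ε ‖p_ε‖ ≤ (‖f‖² + ‖g‖²)^{1/2}`, and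
`N(p_ε) ≤ c_N ((‖f‖² + ‖g‖²)^{1/2} + ‖f‖)` under the Nečas-type inf-sup bound. -/
theorem epsStokes_uniform_boundedness {V Q : Type*}
    [NormedAddCommGroup V] [InnerProductSpace ℝ V] [CompleteSpace V]
    [NormedAddCommGroup Q] [InnerProductSpace ℝ Q] [CompleteSpace Q]
    (b : V →L[ℝ] Q →L[ℝ] ℝ)
    (N : Seminorm ℝ Q) (cN : ℝ) (hcN : 0 < cN)
    (hNecas : ∀ q : Q, N q ≤ cN * ‖b.flip q‖)
    (f : V →L[ℝ] ℝ) (g : Q →L[ℝ] ℝ)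
    (u : ℝ → V) (p : ℝ → Q)
    (hsol : ∀ ε : ℝ, 0 < ε → ε ≤ 1 →
      (∀ φ : V, ⟪u ε, φ⟫ + b φ (p ε) = f φ) ∧
      (∀ ψ : Q, ε * ⟪p ε, ψ⟫ - b (u ε) ψ = ε * g ψ)) :
    ∀ ε : ℝ, 0 < ε → ε ≤ 1 →
      ‖u ε‖ ≤ Real.sqrt (‖f‖ ^ 2 + ‖g‖ ^ 2) ∧
      Real.sqrt ε * ‖p ε‖ ≤ Real.sqrt (‖f‖ ^ 2 + ‖g‖ ^ 2) ∧
      N (p ε) ≤ cN * (Real.sqrt (‖f‖ ^ 2 + ‖g‖ ^ 2) + ‖f‖) :=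
  epsStokes_uniform_boundedness_general b N cN hcN hNecas f g u p hsol
end
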